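/- arXiv:1709.07463 — 3 statements merged into one kernel-verified Lean document; each statement's English description precedes it below -/
import Mathlib

section
/- Kato's inequality in the smooth, nonvanishing case: if f : ℝ^m → ℂ is smooth and nowhere vanishing, then at every point, Δ|f| ≥ Re(conj(sign f) · Δf), where sign f = f/|f|. -/
open Finset

/-- The Euclidean Laplacian: sum of second partial derivatives. -/
noncomputable def lap {m : ℕ} {F : Type*} [NormedAddCommGroup F] [NormedSpace ℝ F]
    (g : EuclideanSpace ℝ (Fin m) → F) (x : EuclideanSpace ℝ (Fin m)) : F :=
  ∑ i : Fin m, iteratedFDeriv ℝ 2 g x ![EuclideanSpace.single i 1, EuclideanSpace.single i 1]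

lemma d2_line {m : ℕ} {F : Type*} [NormedAddCommGroup F] [NormedSpace ℝ F]
    {g : EuclideanSpace ℝ (Fin m) → F} (hg : ContDiff ℝ (⊤ : ℕ∞) g)
    (x v : EuclideanSpace ℝ (Fin m)) :
    iteratedFDeriv ℝ 2 g x ![v, v] = deriv (deriv (fun t : ℝ => g (x + t • v))) 0 := by
  have hc : ∀ t : ℝ, HasDerivAt (fun s : ℝ => x + s • v) v t := by
    intro t
    simpa using ((hasDerivAt_id t).smul_const v).const_add x
  have hd1 : ∀ t : ℝ, HasDerivAt (fun s : ℝ => g (x + s • v))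
      (fderiv ℝ g (x + t • v) v) t := fun t =>
    ((hg.differentiable (by simp) (x + t • v)).hasFDerivAt).comp_hasDerivAt t (hc t)
  have hderiv1 : deriv (fun s : ℝ => g (x + s • v)) = fun t => fderiv ℝ g (x + t • v) v := by
    funext t; exact (hd1 t).deriv
  have hfd : ContDiff ℝ (⊤ : ℕ∞) (fderiv ℝ g) := hg.fderiv_right (by simp)
  have hd2 : HasDerivAt (fun t : ℝ => fderiv ℝ g (x + t • v) v)
      (fderiv ℝ (fderiv ℝ g) x v v) 0 := by
    have h1 : HasDerivAt (fun t : ℝ => fderiv ℝ g (x + t • v))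
        (fderiv ℝ (fderiv ℝ g) x v) 0 := by
      have := ((hfd.differentiable (by simp) (x + (0:ℝ) • v)).hasFDerivAt).comp_hasDerivAt 0 (hc 0)
      simpa [Function.comp_def] using this
    exact ((ContinuousLinearMap.apply ℝ F v).hasFDerivAt.comp_hasDerivAt 0 h1)
  rw [iteratedFDeriv_two_apply, hderiv1]
  have := hd2.deriv
  simp only [Matrix.cons_val_zero, Matrix.cons_val_one, Matrix.head_cons]
  exact this.symm


lemma kato_1d (h : ℝ → ℂ) (hh : ContDiff ℝ (⊤ : ℕ∞) h) (hne : ∀ t, h t ≠ 0) :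
    ((starRingEnd ℂ) (h 0 / ((‖h 0‖ : ℝ) : ℂ)) * deriv (deriv h) 0).re
      ≤ deriv (deriv (fun t => (‖h t‖ : ℝ))) 0 := by
  have hdh : Differentiable ℝ h := hh.differentiable (by simp)
  have hh' : ContDiff ℝ ((⊤ : ℕ∞) : WithTop ℕ∞) h := hh.of_le (by simp)
  have hh2 : ContDiff ℝ ((⊤ : ℕ∞) : WithTop ℕ∞) (deriv h) := (contDiff_infty_iff_deriv.mp hh').2
  have hdh2 : Differentiable ℝ (deriv h) := hh2.differentiable (by simp)
  set a : ℝ → ℝ := fun t => (h t).re with ha_def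
  set b : ℝ → ℝ := fun t => (h t).im with hb_def
  set a' : ℝ → ℝ := fun t => (deriv h t).re with ha'_def
  set b' : ℝ → ℝ := fun t => (deriv h t).im with hb'_def
  set a'' : ℝ → ℝ := fun t => (deriv (deriv h) t).re with ha''_def
  set b'' : ℝ → ℝ := fun t => (deriv (deriv h) t).im with hb''_def
  have ha : ∀ t, HasDerivAt a (a' t) t := fun t =>
    Complex.reCLM.hasFDerivAt.comp_hasDerivAt t (hdh t).hasDerivAt
  have hb : ∀ t, HasDerivAt b (b' t) t := fun t =>
    Complex.imCLM.hasFDerivAt.comp_hasDerivAt t (hdh t).hasDerivAt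
  have ha' : ∀ t, HasDerivAt a' (a'' t) t := fun t =>
    Complex.reCLM.hasFDerivAt.comp_hasDerivAt t (hdh2 t).hasDerivAt
  have hb' : ∀ t, HasDerivAt b' (b'' t) t := fun t =>
    Complex.imCLM.hasFDerivAt.comp_hasDerivAt t (hdh2 t).hasDerivAt
  set u : ℝ → ℝ := fun t => ‖h t‖ with hu_def
  set N : ℝ → ℝ := fun t => a t * a' t + b t * b' t with hN_def
  have hupos : ∀ t, 0 < u t := fun t => norm_pos_iff.mpr (hne t)
  have huq : ∀ t, u t ^ 2 = a t ^ 2 + b t ^ 2 := by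
    intro t
    simp only [hu_def, Complex.sq_norm, Complex.normSq_apply, ha_def, hb_def]
    ring
  have hq : ∀ t, HasDerivAt (fun s => a s ^ 2 + b s ^ 2) (2 * N t) t := by
    intro t
    have := (((ha t).pow 2).add ((hb t).pow 2))
    refine this.congr_deriv ?_
    simp [hN_def]; ring
  have hu : ∀ t, HasDerivAt u (N t / u t) t := by
    intro t
    have hq0 : a t ^ 2 + b t ^ 2 ≠ 0 := by
      have := huq t; nlinarith [hupos t]
    have hs := (Real.hasDerivAt_sqrt hq0).comp t (hq t)
    have hequ : u = fun s => Real.sqrt (a s ^ 2 + b s ^ 2) := by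
      funext s
      rw [hu_def]
      simp only [Complex.norm_def, Complex.normSq_apply, ha_def, hb_def]
      ring_nf
    have hsq : Real.sqrt (a t ^ 2 + b t ^ 2) = u t := by
      rw [← huq t, Real.sqrt_sq (hupos t).le]
    rw [hequ]
    refine hs.congr_deriv ?_
    simp only [hsq]
    field_simp
  -- second derivative of u at 0
  have hN' : ∀ t, HasDerivAt N (a' t ^ 2 + a t * a'' t + b' t ^ 2 + b t * b'' t) t := by
    intro t
    have := ((ha t).mul (ha' t)).add ((hb t).mul (hb' t))
    refine this.congr_deriv ?_
    ring
  have hu2 : HasDerivAt (fun t => N t / u t)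
      (((a' 0 ^ 2 + a 0 * a'' 0 + b' 0 ^ 2 + b 0 * b'' 0) * u 0 - N 0 * (N 0 / u 0)) / u 0 ^ 2)
      0 := (hN' 0).div (hu 0) (hupos 0).ne'
  have hderivu : deriv u = fun t => N t / u t := funext fun t => (hu t).deriv
  have hfinal : deriv (deriv u) 0
      = ((a' 0 ^ 2 + a 0 * a'' 0 + b' 0 ^ 2 + b 0 * b'' 0) * u 0 - N 0 * (N 0 / u 0)) / u 0 ^ 2 := by
    rw [hderivu]; exact hu2.deriv
  have hLHS : ((starRingEnd ℂ) (h 0 / ((‖h 0‖ : ℝ) : ℂ)) * deriv (deriv h) 0).re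
      = (a 0 * a'' 0 + b 0 * b'' 0) / u 0 := by
    rw [map_div₀, Complex.conj_ofReal, div_mul_eq_mul_div, Complex.div_ofReal_re]
    simp [Complex.mul_re, ha_def, hb_def, ha''_def, hb''_def, hu_def]
  have hCS : N 0 ^ 2 ≤ (a' 0 ^ 2 + b' 0 ^ 2) * u 0 ^ 2 := by
    rw [huq 0]
    simp only [hN_def]
    nlinarith [sq_nonneg (a 0 * b' 0 - b 0 * a' 0)]
  show ((starRingEnd ℂ) (h 0 / ((‖h 0‖ : ℝ) : ℂ)) * deriv (deriv h) 0).re ≤ deriv (deriv u) 0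
  have h3 : (0:ℝ) < u 0 := hupos 0
  rw [hLHS, hfinal]
  rw [div_le_div_iff₀ h3 (pow_pos h3 2)]
  have h4 : N 0 * (N 0 / u 0) = N 0 ^ 2 / u 0 := by ring
  rw [h4, sub_mul, div_mul_cancel₀ _ h3.ne']
  nlinarith [hCS]

/-- Kato's inequality in the smooth nonvanishing case: if `f : ℝ^m → ℂ` is smooth and
nowhere vanishing then at every point `Re (conj (sign f) * Δ f) ≤ Δ |f|`,
where `sign f = f / |f|`. -/
theorem stmt_2 {m : ℕ} (f : EuclideanSpace ℝ (Fin m) → ℂ)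
    (hf : ContDiff ℝ (⊤ : ℕ∞) f) (hne : ∀ x, f x ≠ 0) (x : EuclideanSpace ℝ (Fin m)) :
    ((starRingEnd ℂ) (f x / ((‖f x‖ : ℝ) : ℂ)) * lap f x).re
      ≤ lap (fun y => (‖f y‖ : ℝ)) x := by
  have habs : ContDiff ℝ (⊤ : ℕ∞) (fun y => (‖f y‖ : ℝ)) := by
    have := hf.norm ℝ hne
    simpa using this
  rw [lap, lap, Finset.mul_sum, Complex.re_sum]
  apply Finset.sum_le_sum
  intro i _
  rw [d2_line hf, d2_line habs]
  have key := kato_1d (fun t : ℝ => f (x + t • EuclideanSpace.single i 1))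
    (hf.comp (contDiff_const.add (contDiff_id.smul contDiff_const)))
    (fun t => hne _)
  simpa [zero_smul, add_zero] using key
end

section
/- Pointwise identity underlying Kato's inequality: for a smooth function f : ℝ^m → ℂ with f nowhere zero, one has |f| · Δ|f| = Re(conj(f) · Δf) + |∇f|² − |∇|f||², and |∇|f||² ≤ |∇f|² pointwise; consequently Δ|f| ≥ Re(conj(sign f) · Δf). -/
open Finset

/-- The `i`-th partial derivative. -/
noncomputable def pd {m : ℕ} {F : Type*} [NormedAddCommGroup F] [NormedSpace ℝ F]
    (i : Fin m) (g : EuclideanSpace ℝ (Fin m) → F) (x : EuclideanSpace ℝ (Fin m)) : F :=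
  fderiv ℝ g x (EuclideanSpace.single i 1)

section Aux
variable {E : Type*} [NormedAddCommGroup E] [NormedSpace ℝ E]
  {F : Type*} [NormedAddCommGroup F] [NormedSpace ℝ F]

lemma aux_Dsmooth {g : E → F} (hg : ContDiff ℝ (⊤ : ℕ∞) g) (w : E) :
    ContDiff ℝ (⊤ : ℕ∞) (fun y => fderiv ℝ g y w) :=
  (hg.fderiv_right (by simp)).clm_apply contDiff_const

lemma aux_d2 {g : E → F} (hg : ContDiff ℝ (⊤ : ℕ∞) g) (w x : E) :
    iteratedFDeriv ℝ 2 g x ![w, w] = fderiv ℝ (fun y => fderiv ℝ g y w) x w := by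
  have hd : DifferentiableAt ℝ (fderiv ℝ g) x :=
    ((hg.fderiv_right (m := 1) (WithTop.coe_le_coe.mpr le_top)).differentiable one_ne_zero) x
  have e : fderiv ℝ (fun y => fderiv ℝ g y w) x
      = (ContinuousLinearMap.apply ℝ F w).comp (fderiv ℝ (fderiv ℝ g) x) :=
    ((ContinuousLinearMap.apply ℝ F w).hasFDerivAt.comp x hd.hasFDerivAt).fderiv
  rw [iteratedFDeriv_two_apply, e]
  simp

lemma aux_Dmul {a b : E → ℝ} {x : E} (ha : DifferentiableAt ℝ a x)
    (hb : DifferentiableAt ℝ b x) (w : E) :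
    fderiv ℝ (fun y => a y * b y) x w = fderiv ℝ a x w * b x + a x * fderiv ℝ b x w := by
  rw [fderiv_fun_mul ha hb]
  simp
  ring

lemma aux_first {u v h : E → ℝ} (hu : ContDiff ℝ (⊤ : ℕ∞) u) (hv : ContDiff ℝ (⊤ : ℕ∞) v)
    (hh : ContDiff ℝ (⊤ : ℕ∞) h) (hsq : ∀ y, h y * h y = u y * u y + v y * v y) (w x : E) :
    h x * fderiv ℝ h x w = u x * fderiv ℝ u x w + v x * fderiv ℝ v x w := by
  have e0 : (fun z => h z * h z) = (fun z => u z * u z + v z * v z) := funext hsq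
  have e1 := congrArg (fun g => fderiv ℝ g x w) e0
  rw [aux_Dmul (hh.differentiable (by simp) x) (hh.differentiable (by simp) x) w] at e1
  rw [fderiv_fun_add ((hu.mul hu).differentiable (by simp) x) ((hv.mul hv).differentiable (by simp) x)] at e1
  simp only [ContinuousLinearMap.add_apply] at e1
  rw [aux_Dmul (hu.differentiable (by simp) x) (hu.differentiable (by simp) x) w,
    aux_Dmul (hv.differentiable (by simp) x) (hv.differentiable (by simp) x) w] at e1
  linarith

lemma aux_key {u v h : E → ℝ} (hu : ContDiff ℝ (⊤ : ℕ∞) u) (hv : ContDiff ℝ (⊤ : ℕ∞) v)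
    (hh : ContDiff ℝ (⊤ : ℕ∞) h) (hsq : ∀ y, h y * h y = u y * u y + v y * v y) (w x : E) :
    fderiv ℝ h x w ^ 2 + h x * fderiv ℝ (fun y => fderiv ℝ h y w) x w
      = fderiv ℝ u x w ^ 2 + fderiv ℝ v x w ^ 2
        + u x * fderiv ℝ (fun y => fderiv ℝ u y w) x w
        + v x * fderiv ℝ (fun y => fderiv ℝ v y w) x w := by
  have e0 : (fun y => h y * fderiv ℝ h y w)
      = (fun y => u y * fderiv ℝ u y w + v y * fderiv ℝ v y w) :=
    funext fun y => aux_first hu hv hh hsq w y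
  have e1 := congrArg (fun g => fderiv ℝ g x w) e0
  rw [aux_Dmul (hh.differentiable (by simp) x) ((aux_Dsmooth hh w).differentiable (by simp) x) w] at e1
  rw [fderiv_fun_add ((hu.mul (aux_Dsmooth hu w)).differentiable (by simp) x)
    ((hv.mul (aux_Dsmooth hv w)).differentiable (by simp) x)] at e1
  simp only [ContinuousLinearMap.add_apply] at e1
  rw [aux_Dmul (hu.differentiable (by simp) x) ((aux_Dsmooth hu w).differentiable (by simp) x) w,
    aux_Dmul (hv.differentiable (by simp) x) ((aux_Dsmooth hv w).differentiable (by simp) x) w] at e1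
  nlinarith [e1]

lemma aux_cs {u v h : E → ℝ} (hu : ContDiff ℝ (⊤ : ℕ∞) u) (hv : ContDiff ℝ (⊤ : ℕ∞) v)
    (hh : ContDiff ℝ (⊤ : ℕ∞) h) (hsq : ∀ y, h y * h y = u y * u y + v y * v y)
    (hpos : ∀ y, 0 < h y) (w x : E) :
    fderiv ℝ h x w ^ 2 ≤ fderiv ℝ u x w ^ 2 + fderiv ℝ v x w ^ 2 := by
  have e := aux_first hu hv hh hsq w x
  have hp := hpos x
  have h2 := hsq x
  have he2 : (h x * fderiv ℝ h x w) ^ 2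
      = (u x * fderiv ℝ u x w + v x * fderiv ℝ v x w) ^ 2 := by rw [e]
  have key : h x ^ 2 * (fderiv ℝ u x w ^ 2 + fderiv ℝ v x w ^ 2 - fderiv ℝ h x w ^ 2) ≥ 0 := by
    nlinarith [sq_nonneg (u x * fderiv ℝ v x w - v x * fderiv ℝ u x w)]
  nlinarith [mul_pos hp hp]

lemma aux_re_iter {f : E → ℂ} (hf : ContDiff ℝ (⊤ : ℕ∞) f) (x : E) (M : Fin 2 → E) :
    (iteratedFDeriv ℝ 2 f x M).re = iteratedFDeriv ℝ 2 (fun y => (f y).re) x M := by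
  have h := Complex.reCLM.iteratedFDeriv_comp_left (hf.contDiffAt (x := x)) (i := 2) (WithTop.coe_le_coe.mpr le_top)
  have e : (fun y => (f y).re) = (⇑Complex.reCLM ∘ f) := rfl
  rw [e, h]
  rfl

lemma aux_im_iter {f : E → ℂ} (hf : ContDiff ℝ (⊤ : ℕ∞) f) (x : E) (M : Fin 2 → E) :
    (iteratedFDeriv ℝ 2 f x M).im = iteratedFDeriv ℝ 2 (fun y => (f y).im) x M := by
  have h := Complex.imCLM.iteratedFDeriv_comp_left (hf.contDiffAt (x := x)) (i := 2) (WithTop.coe_le_coe.mpr le_top)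
  have e : (fun y => (f y).im) = (⇑Complex.imCLM ∘ f) := rfl
  rw [e, h]
  rfl

lemma aux_pd_re {f : E → ℂ} (hf : ContDiff ℝ (⊤ : ℕ∞) f) (x w : E) :
    fderiv ℝ (fun y => (f y).re) x w = (fderiv ℝ f x w).re := by
  have : fderiv ℝ (fun y => (f y).re) x
      = Complex.reCLM.comp (fderiv ℝ f x) :=
    (Complex.reCLM.hasFDerivAt.comp x ((hf.differentiable (by simp) x).hasFDerivAt)).fderiv
  rw [this]; rfl

lemma aux_pd_im {f : E → ℂ} (hf : ContDiff ℝ (⊤ : ℕ∞) f) (x w : E) :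
    fderiv ℝ (fun y => (f y).im) x w = (fderiv ℝ f x w).im := by
  have : fderiv ℝ (fun y => (f y).im) x
      = Complex.imCLM.comp (fderiv ℝ f x) :=
    (Complex.imCLM.hasFDerivAt.comp x ((hf.differentiable (by simp) x).hasFDerivAt)).fderiv
  rw [this]; rfl

end Aux

/-- Pointwise identity underlying Kato's inequality: for smooth nowhere-vanishing
`f : ℝ^m → ℂ`, one has `|f| Δ|f| = Re (conj f * Δ f) + |∇f|² - |∇|f||²`, the gradient
bound `|∇|f||² ≤ |∇f|²`, and consequently `Δ|f| ≥ Re (conj (sign f) * Δ f)`. -/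
theorem stmt_4 {m : ℕ} (f : EuclideanSpace ℝ (Fin m) → ℂ)
    (hf : ContDiff ℝ (⊤ : ℕ∞) f) (hne : ∀ x, f x ≠ 0) (x : EuclideanSpace ℝ (Fin m)) :
    (‖f x‖ * lap (fun y => (‖f y‖ : ℝ)) x
        = ((starRingEnd ℂ) (f x) * lap f x).re
          + ∑ i : Fin m, ‖pd i f x‖ ^ 2
          - ∑ i : Fin m, (pd i (fun y => (‖f y‖ : ℝ)) x) ^ 2)
    ∧ (∑ i : Fin m, (pd i (fun y => (‖f y‖ : ℝ)) x) ^ 2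
        ≤ ∑ i : Fin m, ‖pd i f x‖ ^ 2)
    ∧ ((starRingEnd ℂ) (f x / ‖f x‖) * lap f x).re
        ≤ lap (fun y => (‖f y‖ : ℝ)) x := by
  set U : EuclideanSpace ℝ (Fin m) → ℝ := fun y => (f y).re with hUdef
  set V : EuclideanSpace ℝ (Fin m) → ℝ := fun y => (f y).im with hVdef
  set H : EuclideanSpace ℝ (Fin m) → ℝ := fun y => ‖f y‖ with hHdef
  set w : Fin m → EuclideanSpace ℝ (Fin m) := fun i => EuclideanSpace.single i (1 : ℝ) with hwdef
  have hU : ContDiff ℝ (⊤ : ℕ∞) U := Complex.reCLM.contDiff.comp hf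
  have hV : ContDiff ℝ (⊤ : ℕ∞) V := Complex.imCLM.contDiff.comp hf
  have hH : ContDiff ℝ (⊤ : ℕ∞) H := by
    rw [contDiff_iff_contDiffAt]
    intro y
    have := ContDiffAt.norm ℝ hf.contDiffAt (hne y)
    simpa [hHdef] using this
  have hsq : ∀ y, H y * H y = U y * U y + V y * V y := fun y => by
    simp only [hHdef, hUdef, hVdef]
    rw [← Complex.normSq_apply, Complex.normSq_eq_norm_sq, sq]
  have hpos : ∀ y, 0 < H y := fun y => norm_pos_iff.mpr (hne y)
  -- abbreviations
  have lapH : lap H x = ∑ i : Fin m, fderiv ℝ (fun y => fderiv ℝ H y (w i)) x (w i) :=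
    Finset.sum_congr rfl fun i _ => aux_d2 hH (w i) x
  have lapre : (lap f x).re = ∑ i : Fin m, fderiv ℝ (fun y => fderiv ℝ U y (w i)) x (w i) := by
    rw [lap, Complex.re_sum]
    exact Finset.sum_congr rfl fun i _ => by
      rw [aux_re_iter hf]; exact aux_d2 hU (w i) x
  have lapim : (lap f x).im = ∑ i : Fin m, fderiv ℝ (fun y => fderiv ℝ V y (w i)) x (w i) := by
    rw [lap, Complex.im_sum]
    exact Finset.sum_congr rfl fun i _ => by
      rw [aux_im_iter hf]; exact aux_d2 hV (w i) x
  have pdf2 : ∀ i, ‖pd i f x‖ ^ 2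
      = fderiv ℝ U x (w i) ^ 2 + fderiv ℝ V x (w i) ^ 2 := by
    intro i
    rw [Complex.sq_norm, Complex.normSq_apply]
    rw [show fderiv ℝ U x (w i) = (fderiv ℝ f x (w i)).re from aux_pd_re hf x (w i),
      show fderiv ℝ V x (w i) = (fderiv ℝ f x (w i)).im from aux_pd_im hf x (w i)]
    show (fderiv ℝ f x (w i)).re * (fderiv ℝ f x (w i)).re
      + (fderiv ℝ f x (w i)).im * (fderiv ℝ f x (w i)).im = _
    ring
  have pdH : ∀ i, pd i (fun y => (‖f y‖ : ℝ)) x = fderiv ℝ H x (w i) :=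
    fun i => rfl
  have conjre : ((starRingEnd ℂ) (f x) * lap f x).re
      = U x * (lap f x).re + V x * (lap f x).im := by
    simp [Complex.mul_re, hUdef, hVdef]
  have KEY : ∑ i : Fin m, (fderiv ℝ H x (w i) ^ 2
        + H x * fderiv ℝ (fun y => fderiv ℝ H y (w i)) x (w i))
      = ∑ i : Fin m, (fderiv ℝ U x (w i) ^ 2 + fderiv ℝ V x (w i) ^ 2
        + U x * fderiv ℝ (fun y => fderiv ℝ U y (w i)) x (w i)
        + V x * fderiv ℝ (fun y => fderiv ℝ V y (w i)) x (w i)) :=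
    Finset.sum_congr rfl fun i _ => aux_key hU hV hH hsq (w i) x
  simp only [Finset.sum_add_distrib, ← Finset.mul_sum] at KEY
  have part1 : ‖f x‖ * lap (fun y => (‖f y‖ : ℝ)) x
      = ((starRingEnd ℂ) (f x) * lap f x).re
        + ∑ i : Fin m, ‖pd i f x‖ ^ 2
        - ∑ i : Fin m, (pd i (fun y => (‖f y‖ : ℝ)) x) ^ 2 := by
    have e1 : ∑ i : Fin m, ‖pd i f x‖ ^ 2
        = ∑ i : Fin m, fderiv ℝ U x (w i) ^ 2 + ∑ i : Fin m, fderiv ℝ V x (w i) ^ 2 := by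
      rw [← Finset.sum_add_distrib]
      exact Finset.sum_congr rfl fun i _ => pdf2 i
    have e2 : ∑ i : Fin m, (pd i (fun y => (‖f y‖ : ℝ)) x) ^ 2
        = ∑ i : Fin m, fderiv ℝ H x (w i) ^ 2 :=
      Finset.sum_congr rfl fun i _ => by rw [pdH i]
    have habs : ‖f x‖ = H x := rfl
    rw [habs, lapH, conjre, lapre, lapim, e1, e2]
    linarith [KEY]
  have part2 : ∑ i : Fin m, (pd i (fun y => (‖f y‖ : ℝ)) x) ^ 2
      ≤ ∑ i : Fin m, ‖pd i f x‖ ^ 2 := by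
    refine Finset.sum_le_sum fun i _ => ?_
    rw [pdH i, pdf2 i]
    exact aux_cs hU hV hH hsq hpos (w i) x
  refine ⟨part1, part2, ?_⟩
  -- part 3
  have hHx : 0 < H x := hpos x
  have e3 : ((starRingEnd ℂ) (f x / ‖f x‖) * lap f x).re
      = ((starRingEnd ℂ) (f x) * lap f x).re / H x := by
    rw [map_div₀, Complex.conj_ofReal]
    rw [div_mul_eq_mul_div, Complex.div_ofReal_re]
  rw [e3, div_le_iff₀ hHx]
  have : ((starRingEnd ℂ) (f x) * lap f x).re
      ≤ ‖f x‖ * lap (fun y => (‖f y‖ : ℝ)) x := by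
    rw [part1]; linarith [part2]
  calc ((starRingEnd ℂ) (f x) * lap f x).re
      ≤ ‖f x‖ * lap (fun y => (‖f y‖ : ℝ)) x := this
    _ = lap (fun y => (‖f y‖ : ℝ)) x * H x := by
        rw [mul_comm]
end

section
/- Integration-by-parts positivity argument: if u ∈ L²(ℝ^m, ℝ) satisfies ∫ u (φ − Δφ) ≥ 0 for all 0 ≤ φ ∈ C_c^∞, then writing u = u₊ − u₋, for any cut-off χ ∈ C_c^∞ with 0 ≤ χ ≤ 1 one has ∫ u₋ (u₋ χ² − Δ(u₋ χ²))... [simplified target]: if additionally u is smooth, then ∫ χ² u₋² + ∫ χ² |∇u₋|² ≤ ∫ u₋² |∇χ|² wherever the weak derivative of u₋ exists, hence letting χ run through cut-offs with ‖∇χ_n‖_∞ → 0 and χ_n → 1 gives u₋ = 0. -/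
open MeasureTheory Filter Finset


lemma divPi {n : ℕ} (i : Fin (n+1)) (g : (Fin (n+1) → ℝ) → ℝ)
    (hg : ContDiff ℝ 1 g) (hgc : HasCompactSupport g) :
    ∫ y, fderiv ℝ g y (Pi.single i 1) = 0 := by
  obtain ⟨R0, hR0⟩ := hgc.isCompact.isBounded.subset_closedBall 0
  set R : ℝ := |R0| + 1 with hR
  have hRpos : 0 < R := by positivity
  have hsupp : ∀ y, y ∈ tsupport g → ∀ j, |y j| < R := by
    intro y hy j
    have h1 : ‖y‖ ≤ R0 := by simpa using hR0 hy
    have h2 : |y j| ≤ ‖y‖ := by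
      simpa [Real.norm_eq_abs] using norm_le_pi_norm y j
    calc |y j| ≤ R0 := h2.trans h1
      _ ≤ |R0| := le_abs_self _
      _ < R := by simp [hR]
  set a : Fin (n+1) → ℝ := fun _ => -R with ha
  set b : Fin (n+1) → ℝ := fun _ => R with hb
  have hle : a ≤ b := fun j => by simp [ha, hb]; linarith
  set F : Fin (n+1) → (Fin (n+1) → ℝ) → ℝ := fun j => if j = i then g else 0 with hF
  set F' : Fin (n+1) → (Fin (n+1) → ℝ) → (Fin (n+1) → ℝ) →L[ℝ] ℝ :=
    fun j y => if j = i then fderiv ℝ g y else 0 with hF'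
  have hdiv : ∀ y, (∑ j, F' j y (Pi.single j 1)) = fderiv ℝ g y (Pi.single i 1) := by
    intro y
    rw [Finset.sum_eq_single i]
    · simp [hF']
    · intro j _ hj; simp [hF', hj]
    · simp
  have hcont : Continuous (fun y => fderiv ℝ g y) := hg.continuous_fderiv one_ne_zero
  have key := integral_divergence_of_hasFDerivAt_off_countable' a b hle F F'
    ∅ Set.countable_empty
    (fun j => by
      by_cases hj : j = i
      · subst hj; simpa [hF] using hg.continuous.continuousOn
      · simp [hF, hj]; exact continuousOn_const)
    (fun x _ j => by
      by_cases hj : j = i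
      · subst hj; simpa [hF, hF'] using (hg.differentiable one_ne_zero x).hasFDerivAt
      · simp only [hF, hF', if_neg hj]; exact hasFDerivAt_const 0 x)
    (by
      apply ContinuousOn.integrableOn_compact isCompact_Icc
      apply Continuous.continuousOn
      have : Continuous fun y => fderiv ℝ g y (Pi.single i 1) :=
        (ContinuousLinearMap.apply ℝ ℝ (Pi.single i 1)).continuous.comp hcont
      exact continuous_finset_sum _ fun j _ => by
        by_cases hj : j = i
        · subst hj; simpa [hF'] using this
        · simp [hF', hj]; exact continuous_const)
  have hrhs : ∀ j : Fin (n+1),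
      ((∫ x in Set.Icc (a ∘ j.succAbove) (b ∘ j.succAbove), F j (j.insertNth (b j) x)) -
        ∫ x in Set.Icc (a ∘ j.succAbove) (b ∘ j.succAbove), F j (j.insertNth (a j) x)) = 0 := by
    intro j
    have hz : ∀ (t : ℝ), |t| = R → ∀ x : Fin n → ℝ, F j (j.insertNth t x) = 0 := by
      intro t ht x
      by_cases hj : j = i
      · subst hj
        simp only [hF, if_pos rfl]
        by_contra hgx
        have hmem : j.insertNth t x ∈ tsupport g := subset_tsupport g hgx
        have := hsupp _ hmem j
        rw [Fin.insertNth_apply_same] at this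
        rw [ht] at this; exact lt_irrefl _ this
      · simp [hF, hj]
    have hb' : |b j| = R := by simp [hb, abs_of_pos hRpos]
    have ha' : |a j| = R := by simp [ha, abs_of_pos hRpos]
    rw [show (fun x => F j (j.insertNth (b j) x)) = fun _ => (0:ℝ) from funext (hz _ hb'),
      show (fun x => F j (j.insertNth (a j) x)) = fun _ => (0:ℝ) from funext (hz _ ha')] at *
    simp
  rw [Finset.sum_congr rfl (fun j _ => hrhs j), Finset.sum_const_zero] at key
  have hset : (∫ x in Set.Icc a b, ∑ j, F' j x (Pi.single j 1)) =
      ∫ x, fderiv ℝ g x (Pi.single i 1) := by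
    rw [show (fun x => ∑ j, F' j x (Pi.single j 1)) = fun x => fderiv ℝ g x (Pi.single i 1)
      from funext hdiv]
    apply setIntegral_eq_integral_of_forall_compl_eq_zero
    intro x hx
    have hxs : x ∉ tsupport g := by
      intro hmem
      apply hx
      constructor <;> intro j <;> have := hsupp x hmem j <;>
        simp [ha, hb] <;> [linarith [abs_lt.mp this]; linarith [abs_lt.mp this]]
    have : fderiv ℝ g x = 0 := by
      by_contra h
      exact hxs (support_fderiv_subset ℝ (Function.mem_support.mpr h))
    simp [this]
  rw [← hset, key]


lemma divE {m : ℕ} (i : Fin m) (f : EuclideanSpace ℝ (Fin m) → ℝ)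
    (hf : ContDiff ℝ 1 f) (hfc : HasCompactSupport f) :
    ∫ x, fderiv ℝ f x (EuclideanSpace.single i 1) = 0 := by
  obtain ⟨n, rfl⟩ : ∃ n, m = n + 1 := ⟨m - 1, (Nat.succ_pred_eq_of_pos i.pos).symm⟩
  set e := EuclideanSpace.equiv (Fin (n+1)) ℝ with he
  set g : (Fin (n+1) → ℝ) → ℝ := f ∘ e.symm with hgdef
  have hg : ContDiff ℝ 1 g := hf.comp e.symm.contDiff
  have hgc : HasCompactSupport g := hfc.comp_homeomorph e.symm.toHomeomorph
  have hfe : ∀ x, f x = g (e x) := by intro x; simp [hgdef]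
  have hfd : ∀ x : EuclideanSpace ℝ (Fin (n+1)),
      fderiv ℝ f x (EuclideanSpace.single i 1) = fderiv ℝ g (e x) (Pi.single i 1) := by
    intro x
    have h1 : HasFDerivAt g (fderiv ℝ g (e x)) (e x) :=
      (hg.differentiable one_ne_zero _).hasFDerivAt
    have h2 : HasFDerivAt f ((fderiv ℝ g (e x)).comp (e : EuclideanSpace ℝ (Fin (n+1)) →L[ℝ] (Fin (n+1) → ℝ))) x := by
      have := h1.comp x e.toContinuousLinearMap.hasFDerivAt
      refine this.congr_of_eventuallyEq ?_
      filter_upwards with y using (hfe y).symm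
    rw [h2.fderiv, ContinuousLinearMap.comp_apply]
    have : e (EuclideanSpace.single i 1) = Pi.single i 1 := by
      rfl
    rw [← this]
    rfl
  have hmp := EuclideanSpace.volume_preserving_symm_measurableEquiv_toLp (Fin (n+1))
  calc ∫ x, fderiv ℝ f x (EuclideanSpace.single i 1)
      = ∫ x, fderiv ℝ g (e x) (Pi.single i 1) := by simp_rw [hfd]
    _ = ∫ y, fderiv ℝ g y (Pi.single i 1) := by
        rw [← hmp.integral_comp (MeasurableEquiv.toLp 2 (Fin (n+1) → ℝ)).symm.measurableEmbedding]
        rfl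
    _ = 0 := divPi i g hg hgc

lemma ibp {m : ℕ} (i : Fin m) (φ v : EuclideanSpace ℝ (Fin m) → ℝ)
    (hφ : ContDiff ℝ 1 φ) (hφc : HasCompactSupport φ) (hv : ContDiff ℝ 1 v) :
    ∫ x, φ x * fderiv ℝ v x (EuclideanSpace.single i 1) =
      - ∫ x, fderiv ℝ φ x (EuclideanSpace.single i 1) * v x := by
  have hprod : ContDiff ℝ 1 (fun x => φ x * v x) := hφ.mul hv
  have hprodc : HasCompactSupport (fun x => φ x * v x) := hφc.mul_right
  have hz := divE i _ hprod hprodc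
  have hfd : ∀ x, fderiv ℝ (fun x => φ x * v x) x (EuclideanSpace.single i 1) =
      φ x * fderiv ℝ v x (EuclideanSpace.single i 1) +
      fderiv ℝ φ x (EuclideanSpace.single i 1) * v x := by
    intro x
    have h1 := ((hφ.differentiable one_ne_zero x).hasFDerivAt.fun_mul (hv.differentiable one_ne_zero x).hasFDerivAt)
    rw [h1.fderiv]
    simp [mul_comm]
  rw [show (fun x => fderiv ℝ (fun x => φ x * v x) x (EuclideanSpace.single i 1)) =
      (fun x => φ x * fderiv ℝ v x (EuclideanSpace.single i 1) +
        fderiv ℝ φ x (EuclideanSpace.single i 1) * v x) from funext hfd] at hz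
  have hint1 : Integrable (fun x => φ x * fderiv ℝ v x (EuclideanSpace.single i 1)) := by
    apply Continuous.integrable_of_hasCompactSupport
    · exact hφ.continuous.mul ((ContinuousLinearMap.apply ℝ ℝ (EuclideanSpace.single i 1)).continuous.comp (hv.continuous_fderiv one_ne_zero))
    · exact hφc.mul_right
  have hint2 : Integrable (fun x => fderiv ℝ φ x (EuclideanSpace.single i 1) * v x) := by
    apply Continuous.integrable_of_hasCompactSupport
    · exact ((ContinuousLinearMap.apply ℝ ℝ (EuclideanSpace.single i 1)).continuous.comp (hφ.continuous_fderiv one_ne_zero)).mul hv.continuous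
    · apply HasCompactSupport.mul_right
      apply HasCompactSupport.intro hφc.isCompact
      intro x hx
      have : fderiv ℝ φ x = 0 := by
        by_contra h
        exact hx (tsupport_fderiv_subset ℝ (subset_tsupport _ (Function.mem_support.mpr h)))
      simp [this]
  rw [integral_add hint1 hint2] at hz
  linarith


noncomputable def rr (c t : ℝ) : ℝ := max (-(t+c)) 0
noncomputable def th (c t : ℝ) : ℝ := (rr c t)^2/(1 + rr c t)
noncomputable def thd (c t : ℝ) : ℝ := -(((rr c t)^2 + 2 * rr c t)/(1 + rr c t)^2)
noncomputable def rho (c t : ℝ) : ℝ := (rr c t)^3/(rr c t + 2)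

lemma rr_nonneg (c t : ℝ) : 0 ≤ rr c t := le_max_right _ _

lemma rr_cont (c : ℝ) : Continuous (rr c) :=
  (continuous_neg.comp (continuous_id.add continuous_const)).max continuous_const

lemma th_nonneg (c t : ℝ) : 0 ≤ th c t := by
  apply div_nonneg (sq_nonneg _); linarith [rr_nonneg c t]

lemma th_le_rr (c t : ℝ) : th c t ≤ rr c t := by
  rw [th, div_le_iff₀ (by linarith [rr_nonneg c t])]
  nlinarith [rr_nonneg c t]

lemma rho_nonneg (c t : ℝ) : 0 ≤ rho c t :=
  div_nonneg (pow_nonneg (rr_nonneg c t) 3) (by linarith [rr_nonneg c t])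

lemma rr_eq_zero {c t : ℝ} (h : -c ≤ t) : rr c t = 0 := max_eq_right (by linarith)

lemma rr_pos {c t : ℝ} (h : t < -c) : 0 < rr c t := lt_max_iff.mpr (Or.inl (by linarith))

lemma th_cont (c : ℝ) : Continuous (th c) := by
  apply Continuous.div ((rr_cont c).pow 2) (continuous_const.add (rr_cont c))
  intro t; have := rr_nonneg c t; simp only [Pi.add_apply, Pi.pow_apply]; positivity

lemma thd_cont (c : ℝ) : Continuous (thd c) := by
  apply Continuous.neg
  apply Continuous.div (((rr_cont c).pow 2).add (continuous_const.mul (rr_cont c)))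
    ((continuous_const.add (rr_cont c)).pow 2)
  intro t; have := rr_nonneg c t; simp only [Pi.add_apply, Pi.pow_apply]; positivity

lemma th_hasDeriv (c t : ℝ) : HasDerivAt (th c) (thd c t) t := by
  rcases lt_trichotomy t (-c) with h | h | h
  · -- t < -c : rr = -(t+c) locally
    have hev : th c =ᶠ[nhds t] fun s => (-(s+c))^2/(1 + -(s+c)) := by
      filter_upwards [eventually_lt_nhds h] with s hs
      have hrs : rr c s = -(s+c) := max_eq_left (by linarith)
      rw [th, hrs]
    have hd : HasDerivAt (fun s : ℝ => (-(s+c))^2/(1 + -(s+c)))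
        ((2*(-(t+c))*(-1)*(1 + -(t+c)) - (-(t+c))^2*(-1))/(1 + -(t+c))^2) t := by
      have h1 : HasDerivAt (fun s : ℝ => -(s+c)) (-1) t :=
        ((hasDerivAt_id t).add_const c).neg
      have h2 : HasDerivAt (fun s : ℝ => (-(s+c))^2) (2*(-(t+c))*(-1)) t := by
        simpa [pow_one, mul_comm] using h1.fun_pow 2
      have h3 : HasDerivAt (fun s : ℝ => 1 + -(s+c)) (-1) t := h1.const_add 1
      have hne : (1 + -(t+c)) ≠ 0 := by
        have : 0 < rr c t := rr_pos h
        have : rr c t = -(t+c) := max_eq_left (by linarith)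
        nlinarith [rr_pos h]
      simpa using h2.fun_div h3 hne
    have hrr : rr c t = -(t+c) := max_eq_left (by linarith)
    have : thd c t = ((2*(-(t+c))*(-1)*(1 + -(t+c)) - (-(t+c))^2*(-1))/(1 + -(t+c))^2) := by
      rw [thd, hrr]; ring
    rw [this]
    exact hd.congr_of_eventuallyEq hev
  · -- t = -c : corner; derivative 0
    subst h
    have hthd : thd c (-c) = 0 := by simp [thd, rr_eq_zero (le_refl (-c))]
    rw [hthd]
    rw [hasDerivAt_iff_tendsto_slope]
    have h0 : th c (-c) = 0 := by
      rw [th, rr_eq_zero (le_refl (-c))]; norm_num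
    have hb : ∀ s : ℝ, ‖slope (th c) (-c) s‖ ≤ |s - (-c)| := by
      intro s
      rw [slope_def_field, h0, sub_zero, Real.norm_eq_abs, abs_div]
      rcases le_or_gt (-c) s with hs | hs
      · rw [th, rr_eq_zero hs]
        simp [abs_nonneg]
      · have hrs : rr c s = -(s+c) := max_eq_left (by linarith)
        have hth_le : th c s ≤ (s+c)^2 := by
          rw [th, hrs]
          rw [div_le_iff₀ (by nlinarith)]
          nlinarith
        have habs : |th c s| = th c s := abs_of_nonneg (th_nonneg c s)
        rw [habs, div_le_iff₀ (abs_pos.mpr (sub_ne_zero.mpr (by intro hh; rw [hh] at hs; linarith)))]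
        calc th c s ≤ (s+c)^2 := hth_le
          _ = |s - (-c)| * |s - (-c)| := by
              rw [← abs_mul]; rw [abs_of_nonneg (by nlinarith)]; ring
    apply squeeze_zero_norm hb
    have : Tendsto (fun s : ℝ => |s - (-c)|) (nhds (-c)) (nhds 0) := by
      have hcont : Continuous (fun s : ℝ => |s - (-c)|) :=
        (continuous_id.sub continuous_const).abs
      have := hcont.tendsto (-c)
      simpa using this
    exact this.mono_left nhdsWithin_le_nhds
  · -- t > -c : th = 0 locally
    have hev : th c =ᶠ[nhds t] fun _ => (0:ℝ) := by
      filter_upwards [eventually_gt_nhds h] with s hs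
      rw [th, rr_eq_zero hs.le]; norm_num
    have hthd : thd c t = 0 := by simp [thd, rr_eq_zero h.le]
    rw [hthd]
    exact (hasDerivAt_const t 0).congr_of_eventuallyEq hev

lemma th_deriv_eq (c : ℝ) : deriv (th c) = thd c := funext fun t => (th_hasDeriv c t).deriv

lemma th_contDiff (c : ℝ) : ContDiff ℝ 1 (th c) := by
  rw [contDiff_one_iff_deriv]
  exact ⟨fun t => (th_hasDeriv c t).differentiableAt, by rw [th_deriv_eq]; exact thd_cont c⟩

lemma th_pos {c t : ℝ} (h : t < -c) : 0 < th c t := by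
  have hr := rr_pos h
  rw [th]; positivity

lemma key_ineq (c t χv d e : ℝ) :
    2*χv*(th c t)*d*e + χv^2*(thd c t)*e^2 ≤ d^2 * rho c t := by
  have hr := rr_nonneg c t
  set r := rr c t with hrdef
  rcases eq_or_lt_of_le hr with h0 | hpos
  · have h0 : r = 0 := h0.symm
    rw [th, thd, rho, ← hrdef, h0]
    norm_num
  · set s : ℝ := (r^2 + 2*r)/(1+r)^2 with hsdef
    have hs : 0 < s := by positivity
    have hth : th c t = r^2/(1+r) := by rw [th]
    have hthd : thd c t = -s := by rw [thd]
    have hrho : rho c t = r^3/(r+2) := by rw [rho]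
    have hws : (th c t)^2 = s * rho c t := by
      rw [hth, hrho, hsdef]
      field_simp
    rw [hthd, hrho] at *
    have key : s * (2*χv*(th c t)*d*e + χv^2*(-s)*e^2) ≤ s * (d^2 * (r^3/(r+2))) := by
      nlinarith [sq_nonneg (χv*s*e - (th c t)*d), hws, hs]
    exact le_of_mul_le_mul_left key hs

lemma rho_le_sq {c : ℝ} (hc : 0 < c) (t : ℝ) : rho c t ≤ t^2 := by
  rcases le_or_gt (-c) t with h | h
  · rw [rho, rr_eq_zero h]; norm_num; positivity
  · have hr : rr c t = -(t+c) := max_eq_left (by linarith)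
    have hrpos : 0 < rr c t := rr_pos h
    have hle : rr c t ≤ -t := by rw [hr]; linarith
    rw [rho, div_le_iff₀ (by linarith)]
    have h2 : rr c t ^ 2 ≤ t^2 := by nlinarith
    nlinarith [hrpos, sq_nonneg t]

lemma th_mul_nonpos {c : ℝ} (hc : 0 < c) (t : ℝ) : th c t * t ≤ 0 := by
  rcases le_or_gt (-c) t with h | h
  · rw [th, rr_eq_zero h]; norm_num
  · exact mul_nonpos_of_nonneg_of_nonpos (th_nonneg c t) (by linarith)

lemma abs_th_mul_le {c : ℝ} (hc : 0 < c) (t : ℝ) : |th c t * t| ≤ t^2 := by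
  rcases le_or_gt (-c) t with h | h
  · rw [th, rr_eq_zero h]; norm_num; positivity
  · have hr : rr c t = -(t+c) := max_eq_left (by linarith)
    have h1 : th c t ≤ -(t+c) := (th_le_rr c t).trans_eq hr
    rw [abs_of_nonpos (th_mul_nonpos hc t)]
    nlinarith [th_nonneg c t]

lemma rho_cont (c : ℝ) : Continuous (rho c) := by
  apply Continuous.div ((rr_cont c).pow 3) ((rr_cont c).add continuous_const)
  intro t; have := rr_nonneg c t; simp only [Pi.add_apply, Pi.pow_apply]; positivity


/-- Integration-by-parts positivity argument: if `u ∈ L²(ℝ^m, ℝ)` is smooth with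
`u - Δu ≥ 0` pointwise, and there are cut-offs `χ_n ∈ C_c^∞` with `0 ≤ χ_n ≤ 1`,
`χ_n → 1` pointwise and `‖∇χ_n‖_∞ → 0`, then `u ≥ 0` everywhere. -/
theorem stmt_17 {m : ℕ} (u : EuclideanSpace ℝ (Fin m) → ℝ)
    (husm : ContDiff ℝ (⊤ : ℕ∞) u)
    (hu : MemLp u 2 (volume : Measure (EuclideanSpace ℝ (Fin m))))
    (hpos : ∀ x, 0 ≤ u x - lap u x)
    (χ : ℕ → EuclideanSpace ℝ (Fin m) → ℝ)
    (hχsm : ∀ n, ContDiff ℝ (⊤ : ℕ∞) (χ n)) (hχc : ∀ n, HasCompactSupport (χ n))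
    (hχ01 : ∀ n x, 0 ≤ χ n x ∧ χ n x ≤ 1)
    (hχ1 : ∀ x, Tendsto (fun n => χ n x) atTop (nhds 1))
    (hχ0 : Tendsto (fun n => ⨆ x, ‖fderiv ℝ (χ n) x‖) atTop (nhds 0)) :
    ∀ x, 0 ≤ u x := by
  intro x₀
  by_contra hneg
  push_neg at hneg
  set c : ℝ := -u x₀ / 2 with hcdef
  have hc : 0 < c := by rw [hcdef]; linarith
  have hx₀ : u x₀ < -c := by rw [hcdef]; linarith
  have hu1 : ContDiff ℝ 1 u := husm.of_le (by simp)
  have hwc : Continuous (fun x => th c (u x)) := (th_cont c).comp husm.continuous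
  have hw_cd : ContDiff ℝ 1 (fun x => th c (u x)) := (th_contDiff c).comp hu1
  have hu2 : Integrable (fun x => u x ^ 2) := hu.integrable_sq
  have hmeasρ : Continuous (fun x => rho c (u x)) := (rho_cont c).comp husm.continuous
  have hρint : Integrable (fun x => rho c (u x)) := by
    apply hu2.mono' hmeasρ.aestronglyMeasurable
    apply Eventually.of_forall; intro x
    rw [Real.norm_eq_abs, abs_of_nonneg (rho_nonneg c _)]
    exact rho_le_sq hc _
  have hwuint : Integrable (fun x => th c (u x) * u x) := by
    apply hu2.mono' ((hwc.mul husm.continuous).aestronglyMeasurable)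
    apply Eventually.of_forall; intro x
    rw [Real.norm_eq_abs]
    exact abs_th_mul_le hc _
  set Mρ := ∫ x, rho c (u x) with hMρ
  set du : Fin m → EuclideanSpace ℝ (Fin m) → ℝ :=
    fun i x => fderiv ℝ u x (EuclideanSpace.single i 1) with hdu
  have hfd1 : ContDiff ℝ 1 (fderiv ℝ u) := husm.fderiv_right (by exact WithTop.coe_le_coe.mpr le_top)
  have hdu_cd : ∀ i, ContDiff ℝ 1 (du i) := fun i =>
    hfd1.clm_apply contDiff_const
  have hlap : ∀ x, lap u x = ∑ i, fderiv ℝ (du i) x (EuclideanSpace.single i 1) := by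
    intro x
    rw [lap]
    apply Finset.sum_congr rfl
    intro i _
    rw [iteratedFDeriv_two_apply]
    have hd2 : DifferentiableAt ℝ (fderiv ℝ u) x :=
      (hfd1.differentiable one_ne_zero).differentiableAt
    have hclm := hd2.hasFDerivAt.clm_apply
      (hasFDerivAt_const (EuclideanSpace.single i 1) x)
    have : fderiv ℝ (du i) x = (fderiv ℝ u x).comp 0 +
        (fderiv ℝ (fderiv ℝ u) x).flip (EuclideanSpace.single i 1) := hclm.fderiv
    rw [this]
    simp [ContinuousLinearMap.flip_apply]
  have hlapc : Continuous (lap u) := by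
    rw [show lap u = fun x => ∑ i, fderiv ℝ (du i) x (EuclideanSpace.single i 1)
      from funext hlap]
    exact continuous_finset_sum _ fun i _ =>
      (ContinuousLinearMap.apply ℝ ℝ (EuclideanSpace.single i 1)).continuous.comp
        ((hdu_cd i).continuous_fderiv one_ne_zero)
  have hmain : ∀ n, 0 ≤ (∫ x, (χ n x)^2 * (th c (u x) * u x)) +
      (m : ℝ) * ((⨆ x, ‖fderiv ℝ (χ n) x‖)^2 * Mρ) := by
    intro n
    set φ : EuclideanSpace ℝ (Fin m) → ℝ := fun x => (χ n x)^2 * th c (u x) with hφdef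
    have hχ1' : ContDiff ℝ 1 (χ n) := (hχsm n).of_le (by simp)
    have hφcd : ContDiff ℝ 1 φ := (hχ1'.pow 2).mul hw_cd
    have hχsq : HasCompactSupport (fun x => (χ n x)^2) := by
      apply HasCompactSupport.intro (hχc n).isCompact
      intro x hx
      rw [image_eq_zero_of_notMem_tsupport hx]; ring
    have hφc : HasCompactSupport φ := hχsq.mul_right
    have hφcont : Continuous φ := hφcd.continuous
    have hφnn : ∀ x, 0 ≤ φ x := fun x => mul_nonneg (sq_nonneg _) (th_nonneg _ _)
    have hA : 0 ≤ ∫ x, φ x * (u x - lap u x) :=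
      integral_nonneg fun x => mul_nonneg (hφnn x) (hpos x)
    have hint_φu : Integrable (fun x => φ x * u x) :=
      (hφcont.mul husm.continuous).integrable_of_hasCompactSupport hφc.mul_right
    have hint_term : ∀ i : Fin m,
        Integrable (fun x => φ x * fderiv ℝ (du i) x (EuclideanSpace.single i 1)) := fun i =>
      (hφcont.mul ((ContinuousLinearMap.apply ℝ ℝ (EuclideanSpace.single i 1)).continuous.comp
        ((hdu_cd i).continuous_fderiv one_ne_zero))).integrable_of_hasCompactSupport hφc.mul_right
    have hint_φlap : Integrable (fun x => φ x * lap u x) :=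
      (hφcont.mul hlapc).integrable_of_hasCompactSupport hφc.mul_right
    have hsplit : (∫ x, φ x * (u x - lap u x)) =
        (∫ x, φ x * u x) - ∫ x, φ x * lap u x := by
      rw [← integral_sub hint_φu hint_φlap]
      congr 1; funext x; ring
    have hlapint : (∫ x, φ x * lap u x) =
        ∑ i, ∫ x, φ x * fderiv ℝ (du i) x (EuclideanSpace.single i 1) := by
      rw [← integral_finset_sum _ (fun i _ => hint_term i)]
      congr 1; funext x
      rw [hlap x, Finset.mul_sum]
    have hφd : ∀ (i : Fin m) x, fderiv ℝ φ x (EuclideanSpace.single i 1) =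
        2 * χ n x * th c (u x) * fderiv ℝ (χ n) x (EuclideanSpace.single i 1)
          + (χ n x)^2 * thd c (u x) * du i x := by
      intro i x
      have hχd : HasFDerivAt (χ n) (fderiv ℝ (χ n) x) x :=
        (hχ1'.differentiable one_ne_zero x).hasFDerivAt
      have hsq' : HasFDerivAt (fun y => (χ n y)^2) ((2 * χ n x) • fderiv ℝ (χ n) x) x := by
        have h := (hasDerivAt_pow 2 (χ n x)).comp_hasFDerivAt x hχd
        norm_num at h
        exact h
      have hwd : HasFDerivAt (fun x => th c (u x)) (thd c (u x) • fderiv ℝ u x) x :=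
        (th_hasDeriv c (u x)).comp_hasFDerivAt x (hu1.differentiable one_ne_zero x).hasFDerivAt
      have hm2 := hsq'.mul hwd
      have : fderiv ℝ φ x = (χ n x)^2 • (thd c (u x) • fderiv ℝ u x) +
          th c (u x) • ((2 * χ n x) • fderiv ℝ (χ n) x) := by
        rw [hφdef]; exact hm2.fderiv
      rw [this]
      simp only [ContinuousLinearMap.add_apply, ContinuousLinearMap.smul_apply, smul_eq_mul, hdu]
      ring
    have hibp : ∀ i : Fin m, (∫ x, φ x * fderiv ℝ (du i) x (EuclideanSpace.single i 1)) =
        - ∫ x, fderiv ℝ φ x (EuclideanSpace.single i 1) * du i x := fun i =>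
      ibp i φ (du i) hφcd hφc (hdu_cd i)
    have hlap2 : (∫ x, φ x * lap u x) =
        - ∑ i : Fin m, ∫ x, fderiv ℝ φ x (EuclideanSpace.single i 1) * du i x := by
      rw [hlapint, Finset.sum_congr rfl fun i _ => hibp i, Finset.sum_neg_distrib]
    have hDχint : ∀ i : Fin m, Integrable
        (fun x => (fderiv ℝ (χ n) x (EuclideanSpace.single i 1))^2 * rho c (u x)) := by
      intro i
      apply Continuous.integrable_of_hasCompactSupport
      · exact (((ContinuousLinearMap.apply ℝ ℝ (EuclideanSpace.single i 1)).continuous.comp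
          (hχ1'.continuous_fderiv one_ne_zero)).pow 2).mul hmeasρ
      · apply HasCompactSupport.mul_right
        apply HasCompactSupport.intro ((hχc n).fderiv (𝕜 := ℝ)).isCompact
        intro x hx
        have h0 : fderiv ℝ (χ n) x = 0 := image_eq_zero_of_notMem_tsupport hx
        simp [h0]
    have hterm_int : ∀ i : Fin m,
        Integrable (fun x => fderiv ℝ φ x (EuclideanSpace.single i 1) * du i x) := by
      intro i
      apply Continuous.integrable_of_hasCompactSupport
      · exact ((ContinuousLinearMap.apply ℝ ℝ (EuclideanSpace.single i 1)).continuous.comp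
          (hφcd.continuous_fderiv one_ne_zero)).mul (hdu_cd i).continuous
      · apply HasCompactSupport.mul_right
        apply HasCompactSupport.intro (hφc.fderiv (𝕜 := ℝ)).isCompact
        intro x hx
        have h0 : fderiv ℝ φ x = 0 := image_eq_zero_of_notMem_tsupport hx
        simp [h0]
    have hKbdd : BddAbove (Set.range fun x => ‖fderiv ℝ (χ n) x‖) :=
      ((hχ1'.continuous_fderiv one_ne_zero).norm).bddAbove_range_of_hasCompactSupport
        ((hχc n).fderiv (𝕜 := ℝ)).norm
    set K := ⨆ x, ‖fderiv ℝ (χ n) x‖ with hK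
    have hKle : ∀ (i : Fin m) x,
        (fderiv ℝ (χ n) x (EuclideanSpace.single i 1))^2 ≤ K^2 := by
      intro i x
      have h1 : |fderiv ℝ (χ n) x (EuclideanSpace.single i 1)| ≤ ‖fderiv ℝ (χ n) x‖ := by
        have h2 := (fderiv ℝ (χ n) x).le_opNorm (EuclideanSpace.single i 1)
        rw [EuclideanSpace.norm_single] at h2
        simpa [Real.norm_eq_abs] using h2
      have h3 : |fderiv ℝ (χ n) x (EuclideanSpace.single i 1)| ≤ K :=
        h1.trans (le_ciSup hKbdd x)
      obtain ⟨hl, hr⟩ := abs_le.mp h3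
      exact sq_le_sq' hl hr
    have hbound_i : ∀ i : Fin m,
        (∫ x, fderiv ℝ φ x (EuclideanSpace.single i 1) * du i x) ≤ K^2 * Mρ := by
      intro i
      have hstep1 : (∫ x, fderiv ℝ φ x (EuclideanSpace.single i 1) * du i x) ≤
          ∫ x, (fderiv ℝ (χ n) x (EuclideanSpace.single i 1))^2 * rho c (u x) := by
        apply integral_mono (hterm_int i) (hDχint i)
        intro x
        dsimp only
        rw [hφd i x]
        have hkey := key_ineq c (u x) (χ n x)
          (fderiv ℝ (χ n) x (EuclideanSpace.single i 1)) (du i x)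
        nlinarith [hkey]
      have hstep2 : (∫ x, (fderiv ℝ (χ n) x (EuclideanSpace.single i 1))^2 * rho c (u x)) ≤
          ∫ x, K^2 * rho c (u x) := by
        apply integral_mono (hDχint i) (hρint.const_mul _)
        intro x
        dsimp only
        exact mul_le_mul_of_nonneg_right (hKle i x) (rho_nonneg c _)
      calc (∫ x, fderiv ℝ φ x (EuclideanSpace.single i 1) * du i x)
          ≤ ∫ x, (fderiv ℝ (χ n) x (EuclideanSpace.single i 1))^2 * rho c (u x) := hstep1
        _ ≤ ∫ x, K^2 * rho c (u x) := hstep2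
        _ = K^2 * Mρ := by rw [hMρ, integral_const_mul]
    have hsum : (∑ i : Fin m, ∫ x, fderiv ℝ φ x (EuclideanSpace.single i 1) * du i x) ≤
        (m : ℝ) * (K^2 * Mρ) := by
      calc (∑ i : Fin m, ∫ x, fderiv ℝ φ x (EuclideanSpace.single i 1) * du i x)
          ≤ ∑ _i : Fin m, K^2 * Mρ := Finset.sum_le_sum fun i _ => hbound_i i
        _ = (m : ℝ) * (K^2 * Mρ) := by
            rw [Finset.sum_const, Finset.card_univ, Fintype.card_fin, nsmul_eq_mul]
    have hre : (∫ x, φ x * u x) = ∫ x, (χ n x)^2 * (th c (u x) * u x) := by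
      congr 1; funext x; rw [hφdef]; ring
    rw [hsplit, hlap2] at hA
    rw [← hre]
    linarith [hsum, hA]
  have htend1 : Tendsto (fun n => ∫ x, (χ n x)^2 * (th c (u x) * u x)) atTop
      (nhds (∫ x, th c (u x) * u x)) := by
    apply tendsto_integral_of_dominated_convergence (fun x => u x ^ 2)
    · intro n
      exact (((hχsm n).continuous.pow 2).mul (hwc.mul husm.continuous)).aestronglyMeasurable
    · exact hu2
    · intro n
      apply Eventually.of_forall; intro x
      rw [Real.norm_eq_abs, abs_mul]
      have h01 := hχ01 n x
      have hsq : |(χ n x)^2| ≤ 1 := by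
        rw [abs_of_nonneg (sq_nonneg _)]; nlinarith [h01.1, h01.2]
      calc |(χ n x)^2| * |th c (u x) * u x| ≤ 1 * (u x ^ 2) :=
            mul_le_mul hsq (abs_th_mul_le hc _) (abs_nonneg _) one_pos.le
        _ = u x ^ 2 := one_mul _
    · apply Eventually.of_forall; intro x
      have h2 : Tendsto (fun n => (χ n x)^2) atTop (nhds 1) := by
        have := (hχ1 x).mul (hχ1 x)
        norm_num at this
        simpa [pow_two] using this
      simpa using h2.mul_const (th c (u x) * u x)
  have htend2 : Tendsto (fun n => (m : ℝ) * ((⨆ x, ‖fderiv ℝ (χ n) x‖)^2 * Mρ)) atTop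
      (nhds 0) := by
    have h2 : Tendsto (fun n => (⨆ x, ‖fderiv ℝ (χ n) x‖)^2) atTop (nhds 0) := by
      have := hχ0.mul hχ0
      norm_num at this
      simpa [pow_two] using this
    have h3 := (h2.mul_const Mρ).const_mul (m : ℝ)
    simpa using h3
  have hlim : 0 ≤ ∫ x, th c (u x) * u x := by
    have hsum2 := htend1.add htend2
    have h4 := ge_of_tendsto hsum2 (Eventually.of_forall hmain)
    simpa using h4
  have hle : (∫ x, th c (u x) * u x) ≤ 0 :=
    integral_nonpos fun x => th_mul_nonpos hc _
  have heq : (∫ x, th c (u x) * u x) = 0 := le_antisymm hle hlim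
  have hzero : (fun x => -(th c (u x) * u x)) =ᵐ[(volume : Measure (EuclideanSpace ℝ (Fin m)))]
      (0 : EuclideanSpace ℝ (Fin m) → ℝ) := by
    rw [← integral_eq_zero_iff_of_nonneg]
    · rw [integral_neg, heq, neg_zero]
    · intro x
      simp only [Pi.zero_apply, Left.nonneg_neg_iff]
      exact th_mul_nonpos hc _
    · exact hwuint.neg
  have hcontg : Continuous fun x => -(th c (u x) * u x) := (hwc.mul husm.continuous).neg
  have hall : (fun x => -(th c (u x) * u x)) = (0 : EuclideanSpace ℝ (Fin m) → ℝ) :=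
    (hcontg.ae_eq_iff_eq volume continuous_const).mp hzero
  have hx := congrFun hall x₀
  simp only [Pi.zero_apply, neg_eq_zero] at hx
  have h1 : 0 < th c (u x₀) := th_pos hx₀
  nlinarith [h1, hneg, hx]
end
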